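/- For each i = 1, …, n, let F_i, f_i : ℝ^p × ℝ^q → ℝ be such that ∇F_i is L_{F,1}-Lipschitz, f_i is twice differentiable, ∇f_i is L_{f,1}-Lipschitz, ∇²f_i is L_{f,2}-Lipschitz; set F := (1/n)Σ F_i, f := (1/n)Σ f_i. Let Φ : ℝ^p → ℝ be differentiable with L_Φ-Lipschitz gradient, and suppose x̄ ∈ ℝ^p, y* ∈ ℝ^q, v* ∈ ℝ^q satisfy ∇Φ(x̄) = ∇₁F(x̄, y*) − ∇²₁₂f(x̄, y*) v*. Let r_v ≥ 0 with ‖v*‖ ≤ r_v, let (x_i, y_i, v_i) be points with ‖v_i‖ ≤ r_v, x̄ = (1/n)Σ x_i, ȳ := (1/n)Σ y_i, v̄ := (1/n)Σ v_i, set d̄_x := (1/n)Σ_{i=1}^n [∇₁F_i(x_i, y_i) − ∇²₁₂f_i(x_i, y_i) v_i] and, for a step size α > 0, x̄⁺ := x̄ − α d̄_x. Then Φ(x̄⁺) − Φ(x̄) ≤ −(α/2)‖∇Φ(x̄)‖² − (1/2)(1/α − L_Φ)‖x̄⁺ − x̄‖² + (5αL_{f,1}²/2)‖v̄ − v*‖²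 + (5α(L_{F,1} + L_{f,2} r_v)²/2)‖ȳ − y*‖² + (5αL_{f,1}²/(2n)) Σ_i ‖v_i − v̄‖² + (5α(L_{F,1} + r_v L_{f,2})²/(2n)) Σ_i (‖x_i − x̄‖² + ‖y_i − ȳ‖²). -/

import Mathlib

/-!
The descent lemma for the `L_Φ`-smooth `Φ`, applied to the step `x̄⁺ = x̄ - α d̄`, gives
`Φ(x̄⁺) - Φ(x̄) ≤ -(α/2)‖∇Φ(x̄)‖² - ½(1/α - L_Φ)‖x̄⁺ - x̄‖² + (α/2)‖∇Φ(x̄) - d̄‖²`,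
so everything reduces to bounding the hypergradient error `∇Φ(x̄) - d̄`. It is the average of
the per-agent errors, and each of these splits into four terms: the increments of
`∇₁Fᵢ - ∇²₁₂fᵢ · v*` from `(xᵢ, yᵢ)` to `(x̄, ȳ)` and from `(x̄, ȳ)` to `(x̄, y*)`, and
`∇²₁₂fᵢ(xᵢ, yᵢ)(vᵢ - v̄)` and `∇²₁₂fᵢ(xᵢ, yᵢ)(v̄ - v*)`.
The first two terms are controlled by the Lipschitz constants of `∇₁Fᵢ` and `∇²₁₂fᵢ` together
with `‖v*‖ ≤ r_v`, the last two by `‖∇²₁₂fᵢ‖ ≤ L_{f,1}`, which follows from the Lipschitz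
continuity of `∇₁fᵢ`. Jensen's inequality for the average and
`(a + b + c + d)² ≤ 4(a² + b² + c² + d²)` then give the estimate, even with `4` in place of `5`.
-/

noncomputable section

abbrev Vec (d : ℕ) : Type := EuclideanSpace ℝ (Fin d)

open Finset InnerProductSpace

section Smooth

variable {E : Type*} [NormedAddCommGroup E] [InnerProductSpace ℝ E] [CompleteSpace E]
  {Φ : E → ℝ} {g : E → E} {L : ℝ}

theorem le_add_inner_add_sq_of_lipschitz_gradient (hΦ : ∀ z, HasGradientAt Φ (g z) z)
    (hg : ∀ z z', ‖g z - g z'‖ ≤ L * ‖z - z'‖) (x y : E) :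
    Φ y ≤ Φ x + ⟪g x, y - x⟫_ℝ + L / 2 * ‖y - x‖ ^ 2 := by
  set u := y - x
  let h : ℝ → ℝ := fun t => Φ (x + t • u) - t * ⟪g x, u⟫_ℝ - L / 2 * t ^ 2 * ‖u‖ ^ 2
  have hderiv (t : ℝ) :
      HasDerivAt h (⟪g (x + t • u) - g x, u⟫_ℝ - L * t * ‖u‖ ^ 2) t := by
    have hline : HasDerivAt (fun t : ℝ => x + t • u) u t := by
      simpa using ((hasDerivAt_id t).smul_const u).const_add x
    have hΦline := (hΦ (x + t • u)).hasFDerivAt.comp_hasDerivAt t hline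
    rw [toDual_apply_apply] at hΦline
    refine ((hΦline.sub ((hasDerivAt_id t).mul_const ⟪g x, u⟫_ℝ)).sub
      (((hasDerivAt_pow 2 t).const_mul (L / 2)).mul_const (‖u‖ ^ 2))).congr_deriv ?_
    rw [inner_sub_left]
    ring
  have hanti : AntitoneOn h (Set.Ici 0) := by
    refine antitoneOn_of_hasDerivWithinAt_nonpos (convex_Ici 0)
      (fun t _ => (hderiv t).continuousAt.continuousWithinAt)
      (fun t _ => (hderiv t).hasDerivWithinAt) fun t ht => ?_
    rw [interior_Ici, Set.mem_Ioi] at ht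
    have : ⟪g (x + t • u) - g x, u⟫_ℝ ≤ L * t * ‖u‖ ^ 2 :=
      calc ⟪g (x + t • u) - g x, u⟫_ℝ ≤ ‖g (x + t • u) - g x‖ * ‖u‖ := real_inner_le_norm _ _
        _ ≤ L * ‖x + t • u - x‖ * ‖u‖ := by gcongr; exact hg _ _
        _ = L * t * ‖u‖ ^ 2 := by
          rw [add_sub_cancel_left, norm_smul, Real.norm_of_nonneg ht.le]; ring
    linarith
  have h01 := hanti Set.self_mem_Ici (Set.mem_Ici.2 zero_le_one) zero_le_one
  simp only [h, one_smul, zero_smul, add_zero, u, add_sub_cancel] at h01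
  linarith

theorem descent_of_inexact_gradient_step (hΦ : ∀ z, HasGradientAt Φ (g z) z)
    (hg : ∀ z z', ‖g z - g z'‖ ≤ L * ‖z - z'‖) {α : ℝ} (hα : 0 < α) (x d : E) :
    Φ (x - α • d) - Φ x ≤ -(α / 2) * ‖g x‖ ^ 2 - 1 / 2 * (1 / α - L) * ‖x - α • d - x‖ ^ 2
      + α / 2 * ‖g x - d‖ ^ 2 := by
  have hdesc := le_add_inner_add_sq_of_lipschitz_gradient hΦ hg x (x - α • d)
  have hstep : x - α • d - x = -(α • d) := by abel
  rw [hstep] at hdesc ⊢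
  rw [inner_neg_right, real_inner_smul_right] at hdesc
  rw [norm_neg, norm_smul, Real.norm_of_nonneg hα.le] at hdesc ⊢
  rw [norm_sub_sq_real]
  have hα' : 1 / α * α ^ 2 = α := by field_simp
  linear_combination hdesc + ‖d‖ ^ 2 / 2 * hα'

end Smooth

theorem norm_inv_card_smul_sum_sq_le {ι E : Type*} [SeminormedAddCommGroup E] [NormedSpace ℝ E]
    (s : Finset ι) (w : ι → E) :
    ‖(#s : ℝ)⁻¹ • ∑ i ∈ s, w i‖ ^ 2 ≤ (∑ i ∈ s, ‖w i‖ ^ 2) / #s := by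
  calc ‖(#s : ℝ)⁻¹ • ∑ i ∈ s, w i‖ ^ 2 ≤ ((∑ i ∈ s, ‖w i‖) / #s) ^ 2 := by
        rw [norm_smul, norm_inv, Real.norm_natCast, inv_mul_eq_div]
        gcongr
        exact norm_sum_le _ _
    _ ≤ (∑ i ∈ s, ‖w i‖ ^ 2) / #s := sum_div_card_sq_le_sum_sq_div_card

theorem le_mul_sqrt_of_sq_add_sq_le {a b L s : ℝ} (hL : 0 ≤ L) (h : a ^ 2 + b ^ 2 ≤ L ^ 2 * s) :
    a ≤ L * √s := by
  calc a ≤ √(L ^ 2 * s) := Real.le_sqrt_of_sq_le (by nlinarith [sq_nonneg b])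
    _ = L * √s := by rw [Real.sqrt_mul (sq_nonneg L), Real.sqrt_sq hL]

theorem norm_sub_sub_sub_apply_le {E F : Type*} [SeminormedAddCommGroup E] [NormedSpace ℝ E]
    [SeminormedAddCommGroup F] [NormedSpace ℝ F] {a a' : E} {T T' : F →L[ℝ] E} {v : F}
    {LF Lf2 rv r : ℝ} (ha : ‖a - a'‖ ≤ LF * r) (hT : ‖T - T'‖ ≤ Lf2 * r) (hv : ‖v‖ ≤ rv) :
    ‖a - a' - (T - T') v‖ ≤ (LF + rv * Lf2) * r :=
  calc ‖a - a' - (T - T') v‖ ≤ ‖a - a'‖ + ‖T - T'‖ * ‖v‖ :=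
        (norm_sub_le _ _).trans (by gcongr; exact (T - T').le_opNorm v)
    _ ≤ LF * r + Lf2 * r * rv := by
        gcongr
        exact (norm_nonneg _).trans hT
    _ = (LF + rv * Lf2) * r := by ring

theorem sq_add_add_add_le_four_mul (a b c d : ℝ) :
    (a + b + c + d) ^ 2 ≤ 4 * (a ^ 2 + b ^ 2 + c ^ 2 + d ^ 2) := by
  nlinarith [sq_nonneg (a - b), sq_nonneg (a - c), sq_nonneg (a - d), sq_nonneg (b - c),
    sq_nonneg (b - d), sq_nonneg (c - d)]

section HypergradientError

variable {P Q E : Type*} [NormedAddCommGroup P] [NormedAddCommGroup Q] [NormedSpace ℝ Q]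
  [NormedAddCommGroup E] [NormedSpace ℝ E] {LF Lf1 Lf2 rv : ℝ}

def hypergradientEstimate (G : P → Q → E) (J : P → Q → Q →L[ℝ] E) (x : P) (y v : Q) : E :=
  G x y - J x y v

theorem norm_sq_hypergradientEstimate_sub_le {G : P → Q → E} {J : P → Q → Q →L[ℝ] E}
    (hG : ∀ x y x' y', ‖G x y - G x' y'‖ ≤ LF * √(‖x - x'‖ ^ 2 + ‖y - y'‖ ^ 2))
    (hJ : ∀ x y x' y', ‖J x y - J x' y'‖ ≤ Lf2 * √(‖x - x'‖ ^ 2 + ‖y - y'‖ ^ 2))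
    (hJ_norm : ∀ x y, ‖J x y‖ ≤ Lf1) {vstar : Q} (hvstar : ‖vstar‖ ≤ rv)
    (xbar x : P) (ystar ybar vbar y v : Q) :
    ‖hypergradientEstimate G J xbar ystar vstar - hypergradientEstimate G J x y v‖ ^ 2
      ≤ 4 * ((LF + rv * Lf2) ^ 2 * (‖x - xbar‖ ^ 2 + ‖y - ybar‖ ^ 2)
        + (LF + rv * Lf2) ^ 2 * ‖ybar - ystar‖ ^ 2 + Lf1 ^ 2 * ‖v - vbar‖ ^ 2
        + Lf1 ^ 2 * ‖vbar - vstar‖ ^ 2) := by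
  have hsplit : hypergradientEstimate G J xbar ystar vstar - hypergradientEstimate G J x y v
      = (G xbar ybar - G x y - (J xbar ybar - J x y) vstar)
        + (G xbar ystar - G xbar ybar - (J xbar ystar - J xbar ybar) vstar)
        + J x y (v - vbar) + J x y (vbar - vstar) := by
    simp only [hypergradientEstimate, sub_apply, map_sub]
    abel
  have hy : √(‖xbar - xbar‖ ^ 2 + ‖ystar - ybar‖ ^ 2) = ‖ybar - ystar‖ := by
    rw [sub_self, norm_zero, zero_pow two_ne_zero, zero_add, Real.sqrt_sq (norm_nonneg _),
      norm_sub_rev]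
  have hxy := norm_sub_sub_sub_apply_le (hG xbar ybar x y) (hJ xbar ybar x y) hvstar
  have hystar := norm_sub_sub_sub_apply_le (hG xbar ystar xbar ybar) (hJ xbar ystar xbar ybar)
    hvstar
  rw [hy] at hystar
  have hv := (J x y).le_of_opNorm_le (hJ_norm x y) (v - vbar)
  have hvbar := (J x y).le_of_opNorm_le (hJ_norm x y) (vbar - vstar)
  have hsqrt := Real.sq_sqrt (by positivity : 0 ≤ ‖xbar - x‖ ^ 2 + ‖ybar - y‖ ^ 2)
  rw [hsplit]
  calc _ ≤ ((LF + rv * Lf2) * √(‖xbar - x‖ ^ 2 + ‖ybar - y‖ ^ 2)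
        + (LF + rv * Lf2) * ‖ybar - ystar‖ + Lf1 * ‖v - vbar‖ + Lf1 * ‖vbar - vstar‖) ^ 2 := by
        gcongr
        exact norm_add₄_le.trans (by linear_combination hxy + hystar + hv + hvbar)
    _ ≤ _ := sq_add_add_add_le_four_mul _ _ _ _
    _ = _ := by rw [mul_pow, hsqrt, norm_sub_rev xbar, norm_sub_rev ybar]; ring

theorem norm_sq_avg_hypergradientEstimate_sub_le {n : ℕ} (hn : 0 < n) {G : Fin n → P → Q → E}
    {J : Fin n → P → Q → Q →L[ℝ] E}
    (hG : ∀ i x y x' y', ‖G i x y - G i x' y'‖ ≤ LF * √(‖x - x'‖ ^ 2 + ‖y - y'‖ ^ 2))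
    (hJ : ∀ i x y x' y', ‖J i x y - J i x' y'‖ ≤ Lf2 * √(‖x - x'‖ ^ 2 + ‖y - y'‖ ^ 2))
    (hJ_norm : ∀ i x y, ‖J i x y‖ ≤ Lf1) {vstar : Q} (hvstar : ‖vstar‖ ≤ rv)
    (X : Fin n → P) (Y V : Fin n → Q) (xbar : P) (ystar ybar vbar : Q) :
    ‖(n : ℝ)⁻¹ • ∑ i, (hypergradientEstimate (G i) (J i) xbar ystar vstar
        - hypergradientEstimate (G i) (J i) (X i) (Y i) (V i))‖ ^ 2
      ≤ 4 * (Lf1 ^ 2 * ‖vbar - vstar‖ ^ 2 + (LF + rv * Lf2) ^ 2 * ‖ybar - ystar‖ ^ 2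
        + Lf1 ^ 2 * (∑ i, ‖V i - vbar‖ ^ 2) / n
        + (LF + rv * Lf2) ^ 2 * (∑ i, (‖X i - xbar‖ ^ 2 + ‖Y i - ybar‖ ^ 2)) / n) := by
  have hJensen := norm_inv_card_smul_sum_sq_le univ fun i =>
    hypergradientEstimate (G i) (J i) xbar ystar vstar
      - hypergradientEstimate (G i) (J i) (X i) (Y i) (V i)
  rw [card_univ, Fintype.card_fin] at hJensen
  refine hJensen.trans ?_
  calc _ ≤ (∑ i, 4 * ((LF + rv * Lf2) ^ 2 * (‖X i - xbar‖ ^ 2 + ‖Y i - ybar‖ ^ 2)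
        + (LF + rv * Lf2) ^ 2 * ‖ybar - ystar‖ ^ 2 + Lf1 ^ 2 * ‖V i - vbar‖ ^ 2
        + Lf1 ^ 2 * ‖vbar - vstar‖ ^ 2)) / (n : ℝ) := by
        gcongr with i
        exact norm_sq_hypergradientEstimate_sub_le (hG i) (hJ i) (hJ_norm i) hvstar xbar (X i)
          ystar ybar vbar (Y i) (V i)
    _ = _ := by
      have hn' : (n : ℝ) ≠ 0 := by positivity
      simp only [← mul_sum, sum_add_distrib, sum_const, card_univ, Fintype.card_fin, nsmul_eq_mul]
      field_simp
      ring

end HypergradientError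

theorem descent_step_Phi_general {n p q : ℕ} (hn : 0 < n)
    (LF1 Lf1 Lf2 LΦ rv α : ℝ)
    (hLF1 : 0 ≤ LF1) (hLf1 : 0 ≤ Lf1) (hα : 0 < α)
    (gF1 : Fin n → Vec p → Vec q → Vec p) (gF2 : Fin n → Vec p → Vec q → Vec q)
    (g1 : Fin n → Vec p → Vec q → Vec p) (g2 : Fin n → Vec p → Vec q → Vec q)
    (f12 : Fin n → Vec p → Vec q → (Vec q →L[ℝ] Vec p))
    -- `f12 i x y` is the Jacobian of `∇₁fᵢ` w.r.t. `y`
    (hf12 : ∀ i x y, HasFDerivAt (fun y' => g1 i x y') (f12 i x y) y)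
    -- `∇Fᵢ` is `L_{F,1}`-Lipschitz
    (hgFlip : ∀ i x y x' y',
      ‖gF1 i x y - gF1 i x' y'‖ ^ 2 + ‖gF2 i x y - gF2 i x' y'‖ ^ 2
        ≤ LF1 ^ 2 * (‖x - x'‖ ^ 2 + ‖y - y'‖ ^ 2))
    -- `∇fᵢ` is `L_{f,1}`-Lipschitz
    (hglip : ∀ i x y x' y',
      ‖g1 i x y - g1 i x' y'‖ ^ 2 + ‖g2 i x y - g2 i x' y'‖ ^ 2
        ≤ Lf1 ^ 2 * (‖x - x'‖ ^ 2 + ‖y - y'‖ ^ 2))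
    -- `∇²fᵢ` is `L_{f,2}`-Lipschitz
    (hf12lip : ∀ i x y x' y',
      ‖f12 i x y - f12 i x' y'‖ ≤ Lf2 * Real.sqrt (‖x - x'‖ ^ 2 + ‖y - y'‖ ^ 2))
    -- `Φ` is differentiable with gradient `gradPhi`, which is `L_Φ`-Lipschitz
    (Φ : Vec p → ℝ) (gradPhi : Vec p → Vec p)
    (hΦ : ∀ z, HasGradientAt Φ (gradPhi z) z)
    (hΦlip : ∀ z z', ‖gradPhi z - gradPhi z'‖ ≤ LΦ * ‖z - z'‖)
    (X : Fin n → Vec p) (Y V : Fin n → Vec q)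
    (xbar : Vec p) (ybar : Vec q) (vbar : Vec q)
    (ystar vstar : Vec q) (hvstar_norm : ‖vstar‖ ≤ rv)
    -- `∇Φ(x̄) = ∇₁F(x̄, y*) − ∇²₁₂f(x̄, y*) v*`, with `F = (1/n) ∑ Fᵢ`, `f = (1/n) ∑ fᵢ`
    (hhyper : gradPhi xbar
      = (n : ℝ)⁻¹ • ∑ i, gF1 i xbar ystar - (n : ℝ)⁻¹ • ∑ i, (f12 i xbar ystar) vstar)
    -- the average direction `d̄_x` and the update `x̄⁺ = x̄ − α d̄_x`
    (dbar : Vec p)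
    (hdbar : dbar = (n : ℝ)⁻¹ • ∑ i, (gF1 i (X i) (Y i) - (f12 i (X i) (Y i)) (V i)))
    (xplus : Vec p) (hxplus : xplus = xbar - α • dbar) :
    Φ xplus - Φ xbar
      ≤ -(α / 2) * ‖gradPhi xbar‖ ^ 2
        - 1 / 2 * (1 / α - LΦ) * ‖xplus - xbar‖ ^ 2
        + 5 * α * Lf1 ^ 2 / 2 * ‖vbar - vstar‖ ^ 2
        + 5 * α * (LF1 + Lf2 * rv) ^ 2 / 2 * ‖ybar - ystar‖ ^ 2
        + 5 * α * Lf1 ^ 2 / (2 * n) * ∑ i, ‖V i - vbar‖ ^ 2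
        + 5 * α * (LF1 + rv * Lf2) ^ 2 / (2 * n)
            * ∑ i, (‖X i - xbar‖ ^ 2 + ‖Y i - ybar‖ ^ 2) := by
  have hgF1_lip i x y x' y' : ‖gF1 i x y - gF1 i x' y'‖ ≤ LF1 * √(‖x - x'‖ ^ 2 + ‖y - y'‖ ^ 2) :=
    le_mul_sqrt_of_sq_add_sq_le hLF1 (hgFlip i x y x' y')
  have hf12_norm i x y : ‖f12 i x y‖ ≤ Lf1 := by
    refine (hf12 i x y).le_of_lip' hLf1 (.of_forall fun y' => ?_)
    simpa [Real.sqrt_sq (norm_nonneg _)] using le_mul_sqrt_of_sq_add_sq_le hLf1 (hglip i x y' x y)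
  have herr := norm_sq_avg_hypergradientEstimate_sub_le hn hgF1_lip hf12lip hf12_norm
    hvstar_norm X Y V xbar ystar ybar vbar
  have hgap : gradPhi xbar - dbar = (n : ℝ)⁻¹ • ∑ i,
      (hypergradientEstimate (gF1 i) (f12 i) xbar ystar vstar
        - hypergradientEstimate (gF1 i) (f12 i) (X i) (Y i) (V i)) := by
    rw [hhyper, hdbar, ← smul_sub, ← smul_sub, ← sum_sub_distrib, ← sum_sub_distrib]
    rfl
  rw [← hgap] at herr
  subst hxplus
  have hstep := descent_of_inexact_gradient_step hΦ hΦlip hα xbar dbar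
  have hbound_nonneg : 0 ≤ Lf1 ^ 2 * ‖vbar - vstar‖ ^ 2 + (LF1 + rv * Lf2) ^ 2 * ‖ybar - ystar‖ ^ 2
      + Lf1 ^ 2 * (∑ i, ‖V i - vbar‖ ^ 2) / n
      + (LF1 + rv * Lf2) ^ 2 * (∑ i, (‖X i - xbar‖ ^ 2 + ‖Y i - ybar‖ ^ 2)) / n := by positivity
  linear_combination hstep + α / 2 * herr + α / 2 * hbound_nonneg

/-- One-step descent estimate for the upper-level objective `Φ` along the
average direction `d̄_x = (1/n) ∑ᵢ [∇₁Fᵢ(xᵢ, yᵢ) − ∇²₁₂fᵢ(xᵢ, yᵢ) vᵢ]`, where `Φ` is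
differentiable with `L_Φ`-Lipschitz gradient and
`∇Φ(x̄) = ∇₁F(x̄, y*) − ∇²₁₂f(x̄, y*) v*`, and `x̄⁺ = x̄ − α d̄_x`. -/
theorem descent_step_Phi {n p q : ℕ} (hn : 0 < n)
    (LF1 Lf1 Lf2 LΦ rv α : ℝ)
    (hLF1 : 0 ≤ LF1) (hLf1 : 0 ≤ Lf1) (hLf2 : 0 ≤ Lf2) (hLΦ : 0 ≤ LΦ)
    (hrv : 0 ≤ rv) (hα : 0 < α)
    (F f : Fin n → Vec p → Vec q → ℝ)
    (gF1 : Fin n → Vec p → Vec q → Vec p) (gF2 : Fin n → Vec p → Vec q → Vec q)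
    (g1 : Fin n → Vec p → Vec q → Vec p) (g2 : Fin n → Vec p → Vec q → Vec q)
    (f12 : Fin n → Vec p → Vec q → (Vec q →L[ℝ] Vec p))
    -- `gF1, gF2` are the partial gradients of `F i`, `g1, g2` those of `f i`
    (hgF1 : ∀ i x y, HasGradientAt (fun x' => F i x' y) (gF1 i x y) x)
    (hgF2 : ∀ i x y, HasGradientAt (fun y' => F i x y') (gF2 i x y) y)
    (hg1 : ∀ i x y, HasGradientAt (fun x' => f i x' y) (g1 i x y) x)
    (hg2 : ∀ i x y, HasGradientAt (fun y' => f i x y') (g2 i x y) y)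
    -- `f12 i x y` is the Jacobian of `∇₁fᵢ` w.r.t. `y`
    (hf12 : ∀ i x y, HasFDerivAt (fun y' => g1 i x y') (f12 i x y) y)
    -- `∇Fᵢ` is `L_{F,1}`-Lipschitz
    (hgFlip : ∀ i x y x' y',
      ‖gF1 i x y - gF1 i x' y'‖ ^ 2 + ‖gF2 i x y - gF2 i x' y'‖ ^ 2
        ≤ LF1 ^ 2 * (‖x - x'‖ ^ 2 + ‖y - y'‖ ^ 2))
    -- `∇fᵢ` is `L_{f,1}`-Lipschitz
    (hglip : ∀ i x y x' y',
      ‖g1 i x y - g1 i x' y'‖ ^ 2 + ‖g2 i x y - g2 i x' y'‖ ^ 2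
        ≤ Lf1 ^ 2 * (‖x - x'‖ ^ 2 + ‖y - y'‖ ^ 2))
    -- `∇²fᵢ` is `L_{f,2}`-Lipschitz
    (hf12lip : ∀ i x y x' y',
      ‖f12 i x y - f12 i x' y'‖ ≤ Lf2 * Real.sqrt (‖x - x'‖ ^ 2 + ‖y - y'‖ ^ 2))
    -- `Φ` is differentiable with gradient `gradPhi`, which is `L_Φ`-Lipschitz
    (Φ : Vec p → ℝ) (gradPhi : Vec p → Vec p)
    (hΦ : ∀ z, HasGradientAt Φ (gradPhi z) z)
    (hΦlip : ∀ z z', ‖gradPhi z - gradPhi z'‖ ≤ LΦ * ‖z - z'‖)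
    (X : Fin n → Vec p) (Y V : Fin n → Vec q)
    (xbar : Vec p) (hxbar : xbar = (n : ℝ)⁻¹ • ∑ i, X i)
    (ybar : Vec q) (hybar : ybar = (n : ℝ)⁻¹ • ∑ i, Y i)
    (vbar : Vec q) (hvbar : vbar = (n : ℝ)⁻¹ • ∑ i, V i)
    (hV : ∀ i, ‖V i‖ ≤ rv)
    (ystar vstar : Vec q) (hvstar_norm : ‖vstar‖ ≤ rv)
    -- `∇Φ(x̄) = ∇₁F(x̄, y*) − ∇²₁₂f(x̄, y*) v*`, with `F = (1/n) ∑ Fᵢ`, `f = (1/n) ∑ fᵢ`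
    (hhyper : gradPhi xbar
      = (n : ℝ)⁻¹ • ∑ i, gF1 i xbar ystar - (n : ℝ)⁻¹ • ∑ i, (f12 i xbar ystar) vstar)
    -- the average direction `d̄_x` and the update `x̄⁺ = x̄ − α d̄_x`
    (dbar : Vec p)
    (hdbar : dbar = (n : ℝ)⁻¹ • ∑ i, (gF1 i (X i) (Y i) - (f12 i (X i) (Y i)) (V i)))
    (xplus : Vec p) (hxplus : xplus = xbar - α • dbar) :
    Φ xplus - Φ xbar
      ≤ -(α / 2) * ‖gradPhi xbar‖ ^ 2
        - 1 / 2 * (1 / α - LΦ) * ‖xplus - xbar‖ ^ 2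
        + 5 * α * Lf1 ^ 2 / 2 * ‖vbar - vstar‖ ^ 2
        + 5 * α * (LF1 + Lf2 * rv) ^ 2 / 2 * ‖ybar - ystar‖ ^ 2
        + 5 * α * Lf1 ^ 2 / (2 * n) * ∑ i, ‖V i - vbar‖ ^ 2
        + 5 * α * (LF1 + rv * Lf2) ^ 2 / (2 * n)
            * ∑ i, (‖X i - xbar‖ ^ 2 + ‖Y i - ybar‖ ^ 2) :=
  descent_step_Phi_general hn LF1 Lf1 Lf2 LΦ rv α hLF1 hLf1 hα gF1 gF2 g1 g2 f12 hf12 hgFlip hglip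
    hf12lip Φ gradPhi hΦ hΦlip X Y V xbar ybar vbar ystar vstar hvstar_norm hhyper dbar hdbar xplus
    hxplus
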